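/- Let N_A, N_B ≥ 1 and let (O_μ)_{μ ∈ Fin N_A²} be Hermitian N_A×N_A complex matrices with (1/N_A)·Tr(O_μ O_ν) = δ_{μν}. For a matrix U on ℂ^{N_A} ⊗ ℂ^{N_B} (an (N_A·N_B)×(N_A·N_B) complex matrix with indices written as pairs), define the partial trace over the A factor by (Tr_A U)_{βγ} = ∑_a U_{(a,β),(a,γ)}. Then ∑_{μ ∈ Fin N_A²} (1/(N_A·N_B))·Tr(U (O_μ ⊗ 1_{N_B}) U† (O_μ ⊗ 1_{N_B})) = (1/N_B)·Tr((Tr_A U)·(Tr_A U†)), i.e. the partial spectral form factor of region A equals the sum of autocorrelation functions of all basis operators supported on A. -/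
import Mathlib


open Matrix BigOperators Kronecker

lemma complete_rel (NA : ℕ) (hA : 1 ≤ NA)
    (O : Fin (NA ^ 2) → Matrix (Fin NA) (Fin NA) ℂ)
    (hortho : ∀ μ ν, (1 / (NA : ℂ)) * (O μ * O ν).trace = if μ = ν then 1 else 0)
    (i j k l : Fin NA) :
    ∑ μ : Fin (NA ^ 2), O μ i j * O μ k l = if i = l ∧ j = k then (NA : ℂ) else 0 := by
  have hNA : (NA : ℂ) ≠ 0 := by
    exact_mod_cast Nat.cast_ne_zero.mpr (by omega)
  have hTr : ∀ μ ν, (O μ * O ν).trace = if μ = ν then (NA : ℂ) else 0 := by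
    intro μ ν
    have := hortho μ ν
    field_simp at this
    simpa using this
  have htrace_sum : ∀ (ν : Fin (NA ^ 2)) (c : Fin (NA ^ 2) → ℂ),
      (O ν * ∑ μ, c μ • O μ).trace = (NA : ℂ) * c ν := by
    intro ν c
    rw [Finset.mul_sum, trace_sum]
    have : ∀ μ ∈ Finset.univ, (O ν * c μ • O μ).trace
        = c μ * if ν = μ then (NA : ℂ) else 0 := by
      intro μ _
      rw [Matrix.mul_smul, trace_smul, hTr, smul_eq_mul]
    rw [Finset.sum_congr rfl this]
    simp [Finset.sum_ite_eq, mul_comm]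
  have hli : LinearIndependent ℂ O := by
    rw [Fintype.linearIndependent_iff]
    intro g hg ν
    have h := htrace_sum ν g
    rw [hg, Matrix.mul_zero, trace_zero] at h
    exact (mul_eq_zero.mp h.symm).resolve_left hNA
  have hcard : Fintype.card (Fin (NA ^ 2))
      = Module.finrank ℂ (Matrix (Fin NA) (Fin NA) ℂ) := by
    simp [Module.finrank_matrix, sq]
  have : Nonempty (Fin (NA ^ 2)) := ⟨⟨0, by positivity⟩⟩
  set B := basisOfLinearIndependentOfCardEqFinrank hli hcard with hBdef
  have hB : ⇑B = O := coe_basisOfLinearIndependentOfCardEqFinrank hli hcard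
  have hrepr : ∀ (X : Matrix (Fin NA) (Fin NA) ℂ) ν,
      B.repr X ν = (1 / (NA : ℂ)) * (O ν * X).trace := by
    intro X ν
    have hX : X = ∑ μ, B.repr X μ • O μ := by
      conv_lhs => rw [← B.sum_repr X]
      simp [hB]
    have := htrace_sum ν (B.repr X)
    rw [← hX] at this
    rw [this]
    field_simp
  set X : Matrix (Fin NA) (Fin NA) ℂ :=
    Matrix.of (fun a b => if a = j ∧ b = i then 1 else 0) with hXdef
  have htrX : ∀ ν, (O ν * X).trace = O ν i j := by
    intro ν
    simp only [trace, diag, mul_apply, hXdef, of_apply]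
    rw [Finset.sum_comm]
    simp [ite_and, Finset.sum_ite_eq']
  have hXsum : X = ∑ μ, ((1 / (NA : ℂ)) * O μ i j) • O μ := by
    conv_lhs => rw [← B.sum_repr X]
    refine Finset.sum_congr rfl fun μ _ => ?_
    rw [hB, hrepr, htrX]
  have := congrArg (fun M : Matrix (Fin NA) (Fin NA) ℂ => M k l) hXsum
  simp only [hXdef, of_apply, Matrix.sum_apply, Matrix.smul_apply, smul_eq_mul] at this
  have h2 : ∑ μ : Fin (NA ^ 2), O μ i j * O μ k l
      = (NA : ℂ) * (if k = j ∧ l = i then 1 else 0) := by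
    rw [this, Finset.mul_sum]
    refine Finset.sum_congr rfl fun μ _ => ?_
    field_simp
  rw [h2]
  by_cases h : i = l ∧ j = k
  · simp [h.1, h.2]
  · have : ¬(k = j ∧ l = i) := fun ⟨h1, h2⟩ => h ⟨h2.symm, h1.symm⟩
    simp [this, h]

/-- Partial trace over the `A` factor of a matrix on the bipartite space
`ℂ^{N_A} ⊗ ℂ^{N_B}`: `(Tr_A U)_{βγ} = ∑ a, U_{(a,β),(a,γ)}`. -/
noncomputable def ptrA {NA NB : ℕ} (U : Matrix (Fin NA × Fin NB) (Fin NA × Fin NB) ℂ) :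
    Matrix (Fin NB) (Fin NB) ℂ :=
  Matrix.of fun β γ => ∑ a : Fin NA, U (a, β) (a, γ)

/-- The partial spectral form factor of region `A` equals the sum of
autocorrelation functions of all basis operators supported on `A`. -/
theorem psff_eq_sum_2paf (NA NB : ℕ) (hA : 1 ≤ NA) (hB : 1 ≤ NB)
    (O : Fin (NA ^ 2) → Matrix (Fin NA) (Fin NA) ℂ)
    (hHerm : ∀ μ, (O μ).IsHermitian)
    (hortho : ∀ μ ν, (1 / (NA : ℂ)) * (O μ * O ν).trace = if μ = ν then 1 else 0)
    (U : Matrix (Fin NA × Fin NB) (Fin NA × Fin NB) ℂ) :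
    ∑ μ : Fin (NA ^ 2),
        (1 / ((NA : ℂ) * (NB : ℂ))) *
          (U * (O μ ⊗ₖ (1 : Matrix (Fin NB) (Fin NB) ℂ)) * Uᴴ *
            (O μ ⊗ₖ (1 : Matrix (Fin NB) (Fin NB) ℂ))).trace
      = (1 / (NB : ℂ)) * (ptrA U * ptrA Uᴴ).trace := by
  have hNA : (NA : ℂ) ≠ 0 := by
    exact_mod_cast Nat.cast_ne_zero.mpr (by omega)
  have key : ∑ μ : Fin (NA ^ 2),
      (U * (O μ ⊗ₖ (1 : Matrix (Fin NB) (Fin NB) ℂ)) * Uᴴ *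
        (O μ ⊗ₖ (1 : Matrix (Fin NB) (Fin NB) ℂ))).trace
      = (NA : ℂ) * (ptrA U * ptrA Uᴴ).trace := by
    have tr4 : ∀ μ : Fin (NA ^ 2),
        (U * (O μ ⊗ₖ (1 : Matrix (Fin NB) (Fin NB) ℂ)) * Uᴴ *
          (O μ ⊗ₖ (1 : Matrix (Fin NB) (Fin NB) ℂ))).trace
        = ∑ p, ∑ s, ∑ r, ∑ q, U p q * (O μ ⊗ₖ (1 : Matrix (Fin NB) (Fin NB) ℂ)) q r
            * Uᴴ r s * (O μ ⊗ₖ (1 : Matrix (Fin NB) (Fin NB) ℂ)) s p := by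
      intro μ
      simp only [Matrix.trace, Matrix.diag, Matrix.mul_apply, Finset.sum_mul]
    calc ∑ μ : Fin (NA ^ 2),
        (U * (O μ ⊗ₖ (1 : Matrix (Fin NB) (Fin NB) ℂ)) * Uᴴ *
          (O μ ⊗ₖ (1 : Matrix (Fin NB) (Fin NB) ℂ))).trace
        = ∑ p : Fin NA × Fin NB, ∑ s : Fin NA × Fin NB, ∑ r : Fin NA × Fin NB,
            ∑ q : Fin NA × Fin NB, ∑ μ : Fin (NA ^ 2),
              U p q * (O μ ⊗ₖ (1 : Matrix (Fin NB) (Fin NB) ℂ)) q r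
                * Uᴴ r s * (O μ ⊗ₖ (1 : Matrix (Fin NB) (Fin NB) ℂ)) s p := by
          rw [Finset.sum_congr rfl fun μ _ => tr4 μ, Finset.sum_comm]
          refine Finset.sum_congr rfl fun p _ => ?_
          rw [Finset.sum_comm]
          refine Finset.sum_congr rfl fun s _ => ?_
          rw [Finset.sum_comm]
          refine Finset.sum_congr rfl fun r _ => ?_
          exact Finset.sum_comm
      _ = ∑ p : Fin NA × Fin NB, ∑ s : Fin NA × Fin NB, ∑ r : Fin NA × Fin NB,
            ∑ q : Fin NA × Fin NB,
              (U p q * (starRingEnd ℂ) (U s r)) *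
                ((if q.1 = p.1 ∧ r.1 = s.1 then (NA : ℂ) else 0) *
                  ((if q.2 = r.2 then (1:ℂ) else 0) * (if s.2 = p.2 then (1:ℂ) else 0))) := by
          refine Finset.sum_congr rfl fun p _ => Finset.sum_congr rfl fun s _ =>
            Finset.sum_congr rfl fun r _ => Finset.sum_congr rfl fun q _ => ?_
          rw [← complete_rel NA hA O hortho q.1 r.1 s.1 p.1]
          rw [Finset.sum_mul, Finset.mul_sum]
          refine Finset.sum_congr rfl fun μ _ => ?_
          simp only [kroneckerMap_apply, Matrix.one_apply, Matrix.conjTranspose_apply,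
            starRingEnd_apply]
          ring
      _ = (NA : ℂ) * (ptrA U * ptrA Uᴴ).trace := by
          simp only [Fintype.sum_prod_type, ite_and, mul_ite, ite_mul, mul_zero, zero_mul,
            mul_one, one_mul, Finset.sum_ite_irrel, Finset.sum_const_zero,
            Finset.sum_ite_eq, Finset.sum_ite_eq', Finset.mem_univ, if_true]
          have hRHS : (ptrA U * ptrA Uᴴ).trace
              = ∑ β : Fin NB, ∑ γ : Fin NB,
                  (∑ a : Fin NA, U (a, β) (a, γ)) *
                    ∑ c : Fin NA, (starRingEnd ℂ) (U (c, β) (c, γ)) := by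
            simp only [Matrix.trace, Matrix.diag, Matrix.mul_apply, ptrA, of_apply,
              Matrix.conjTranspose_apply, starRingEnd_apply]
          rw [hRHS]
          rw [Finset.mul_sum]
          rw [Finset.sum_comm]
          refine Finset.sum_congr rfl fun β _ => ?_
          rw [Finset.mul_sum]
          refine ((Finset.sum_congr rfl fun a _ => Finset.sum_comm).trans
            Finset.sum_comm).trans ?_
          refine Finset.sum_congr rfl fun γ _ => ?_
          rw [Finset.sum_mul_sum, Finset.mul_sum]
          refine Finset.sum_congr rfl fun a _ => ?_
          rw [Finset.mul_sum]
          refine Finset.sum_congr rfl fun c _ => ?_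
          ring
  rw [← Finset.mul_sum, key]
  calc (1 / ((NA : ℂ) * (NB : ℂ))) * ((NA : ℂ) * (ptrA U * ptrA Uᴴ).trace)
      = ((NA : ℂ) * (NA : ℂ)⁻¹) * ((1 / (NB : ℂ)) * (ptrA U * ptrA Uᴴ).trace) := by ring
    _ = (1 / (NB : ℂ)) * (ptrA U * ptrA Uᴴ).trace := by
        rw [mul_inv_cancel₀ hNA, one_mul]
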